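/- For every fixed w ∈ (0,∞)^k and θ ∈ ℝ, the log-likelihood l(w, θ, σ²) remains finite as σ² → 0⁺: the limit lim_{σ²→0⁺} l(w, θ, σ²) exists, equals l(w, θ, 0), and is a finite real number. -/

import Mathlib

open MeasureTheory Real Set Filter Topology

/-- Standard normal density. -/
noncomputable def stdPhi (z : ℝ) : ℝ := (Real.sqrt (2 * Real.pi))⁻¹ * Real.exp (-z ^ 2 / 2)

/-- `η_i = √(u_i² + σ²)`. -/
noncomputable def etaFn (u sigma2 : ℝ) : ℝ := Real.sqrt (u ^ 2 + sigma2)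

/-- The cell probability `H`: Gaussian `N(θ, η²)` integral over the annulus
`{y : b ≤ |y| < b'}`, with (possibly infinite) extended-real thresholds. -/
noncomputable def cellH (b b' : EReal) (u θ sigma2 : ℝ) : ℝ :=
  ∫ x in {x : ℝ | b ≤ ((|x| : ℝ) : EReal) ∧ ((|x| : ℝ) : EReal) < b'},
    (etaFn u sigma2)⁻¹ * stdPhi ((x - θ) / etaFn u sigma2)

/-- The log-likelihood `l(w, θ, σ²)` of Dear–Begg selection models. For study `i`
the thresholds on the outcome scale are `b i 0 = 0 ≤ b i 1 ≤ … ≤ b i k = ∞`. -/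
noncomputable def loglik {n k : ℕ} (y u : Fin n → ℝ) (lam : Fin k → ℝ)
    (b : Fin n → ℕ → EReal) (w : Fin k → ℝ) (θ sigma2 : ℝ) : ℝ :=
  -((n : ℝ) / 2) * Real.log (2 * Real.pi)
    + ∑ j, lam j * Real.log (w j)
    - ∑ i, Real.log (etaFn (u i) sigma2)
    - (1 / 2) * ∑ i, ((y i - θ) / etaFn (u i) sigma2) ^ 2
    - ∑ i, Real.log (∑ j : Fin k, w j * cellH (b i (j : ℕ)) (b i ((j : ℕ) + 1)) (u i) θ sigma2)

/-! The density of `N(θ, u² + σ²)` is continuous in the variance and, for variances in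
`[v₀ / 2, 2 v₀]`, bounded by twice the `N(θ, 2 v₀)` density; by dominated convergence every
cell probability `H_ij` is therefore continuous in `σ²` near `0`. Since the boundaries of
study `i` run from `0` to `∞`, some cell `[b_m, b_{m+1})` has `b_m ≤ 0 < b_{m+1}`: it contains
an interval `(0, c)`, so `A_i(w, θ, 0) > 0`, and all terms of `l`, logarithms included, are
continuous at `σ² = 0`. -/

open scoped NNReal
open ProbabilityTheory

lemma continuousAt_gaussianPDFReal_var (μ x : ℝ) {v₀ : ℝ≥0} (hv₀ : v₀ ≠ 0) :
    ContinuousAt (fun v => gaussianPDFReal μ v x) v₀ := by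
  have h : (v₀ : ℝ) ≠ 0 := by exact_mod_cast hv₀
  unfold gaussianPDFReal
  fun_prop (disch := positivity)

lemma gaussianPDFReal_le_two_mul (μ x : ℝ) {v w : ℝ≥0} (hv : v ≠ 0) (hvw : v ≤ w)
    (hw : w ≤ 4 * v) : gaussianPDFReal μ v x ≤ 2 * gaussianPDFReal μ w x := by
  have hv' : (0 : ℝ) < v := by positivity
  have hvw' : (v : ℝ) ≤ w := by exact_mod_cast hvw
  have hw' : (w : ℝ) ≤ 4 * v := by exact_mod_cast hw
  have hw₀ : (0 : ℝ) < w := hv'.trans_le hvw'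
  have hsqrt : √(2 * π * w) / 2 ≤ √(2 * π * v) := by
    have h4 : √(2 * π * (4 * v)) = 2 * √(2 * π * v) := by
      rw [show 2 * π * (4 * v : ℝ) = 2 ^ 2 * (2 * π * v) by ring,
        Real.sqrt_mul (by norm_num), Real.sqrt_sq zero_le_two]
    have := Real.sqrt_le_sqrt (show 2 * π * w ≤ 2 * π * (4 * v) by gcongr)
    linarith
  have hexp : -(x - μ) ^ 2 / (2 * v) ≤ -(x - μ) ^ 2 / (2 * w) := by
    rw [neg_div, neg_div, neg_le_neg_iff]
    gcongr
  calc gaussianPDFReal μ v x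
      ≤ (√(2 * π * w) / 2)⁻¹ * rexp (-(x - μ) ^ 2 / (2 * w)) :=
        mul_le_mul (inv_anti₀ (by positivity) hsqrt) (Real.exp_le_exp.2 hexp) (by positivity)
          (by positivity)
    _ = 2 * gaussianPDFReal μ w x := by
        rw [gaussianPDFReal]; ring

lemma continuousAt_setIntegral_gaussianPDFReal (μ : ℝ) (S : Set ℝ) {v₀ : ℝ≥0}
    (hv₀ : v₀ ≠ 0) :
    ContinuousAt (fun v => ∫ x in S, gaussianPDFReal μ v x) v₀ := by
  have hnear : ∀ᶠ v in 𝓝 v₀, v ≠ 0 ∧ v ≤ 2 * v₀ ∧ 2 * v₀ ≤ 4 * v := by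
    filter_upwards [Ioo_mem_nhds (NNReal.half_lt_self hv₀)
      (lt_two_mul_self (pos_iff_ne_zero.2 hv₀))] with v ⟨hlo, hhi⟩
    have hv₀v : v₀ ≤ 2 * v := ((div_lt_iff₀' two_pos).1 hlo).le
    refine ⟨(pos_of_gt hlo).ne', hhi.le, ?_⟩
    calc 2 * v₀ ≤ 2 * (2 * v) := by gcongr
      _ = 4 * v := by ring
  refine continuousAt_of_dominated
    (Eventually.of_forall fun v => (stronglyMeasurable_gaussianPDFReal μ v).aestronglyMeasurable)
    ?_ ((integrable_gaussianPDFReal μ (2 * v₀)).const_mul 2).integrableOn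
    (ae_of_all _ fun x => continuousAt_gaussianPDFReal_var μ x hv₀)
  filter_upwards [hnear] with v ⟨hv, hle, hge⟩
  refine ae_of_all _ fun x => ?_
  rw [Real.norm_of_nonneg (gaussianPDFReal_nonneg μ v x)]
  exact gaussianPDFReal_le_two_mul μ x hv hle hge

lemma setIntegral_gaussianPDFReal_pos (μ : ℝ) {v : ℝ≥0} (hv : v ≠ 0) {S : Set ℝ}
    (hS : volume S ≠ 0) : 0 < ∫ x in S, gaussianPDFReal μ v x := by
  rw [setIntegral_pos_iff_support_of_nonneg_ae
    (ae_of_all _ fun x => gaussianPDFReal_nonneg μ v x)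
    (integrable_gaussianPDFReal μ v).integrableOn,
    Function.support_eq_univ fun x => (gaussianPDFReal_pos μ v x hv).ne', univ_inter]
  exact pos_iff_ne_zero.2 hS

lemma exists_apply_le_lt_apply_succ {α : Type*} [LinearOrder α] (f : ℕ → α) {c : α}
    {k : ℕ} (h₀ : f 0 ≤ c) (hk : c < f k) : ∃ m < k, f m ≤ c ∧ c < f (m + 1) := by
  induction k with
  | zero => exact absurd hk (not_lt.2 h₀)
  | succ k ih =>
    by_cases hck : f k ≤ c
    · exact ⟨k, k.lt_succ_self, hck, hk⟩
    · obtain ⟨m, hm, hm'⟩ := ih (lt_of_not_ge hck)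
      exact ⟨m, hm.trans k.lt_succ_self, hm'⟩

@[fun_prop]
lemma continuous_etaFn (u : ℝ) : Continuous (etaFn u) := by
  unfold etaFn; fun_prop

lemma etaFn_inv_mul_stdPhi (u θ s x : ℝ) :
    (etaFn u s)⁻¹ * stdPhi ((x - θ) / etaFn u s) =
      gaussianPDFReal θ (u ^ 2 + s).toNNReal x := by
  rcases le_or_gt (u ^ 2 + s) 0 with h | h
  · -- both sides vanish: `√` and `toNNReal` truncate negative arguments to `0`
    simp [etaFn, Real.sqrt_eq_zero'.2 h, Real.toNNReal_of_nonpos h]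
  · have hη : etaFn u s ^ 2 = u ^ 2 + s := Real.sq_sqrt h.le
    have hη0 : etaFn u s ≠ 0 := (Real.sqrt_pos.2 h).ne'
    rw [gaussianPDFReal, Real.coe_toNNReal _ h.le, stdPhi, ← hη,
      Real.sqrt_mul (by positivity) (etaFn u s ^ 2),
      Real.sqrt_sq (x := etaFn u s) (Real.sqrt_nonneg _), div_pow]
    field_simp

def annulus (b b' : EReal) : Set ℝ := (fun x : ℝ => ((|x| : ℝ) : EReal)) ⁻¹' Ico b b'

lemma volume_annulus_ne_zero {b b' : EReal} (hb : b ≤ 0) (hb' : 0 < b') :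
    volume (annulus b b') ≠ 0 := by
  obtain ⟨c, hc₀, hcb'⟩ := EReal.lt_iff_exists_real_btwn.1 hb'
  have hsub : Ioo 0 c ⊆ annulus b b' := fun x ⟨hx₀, hxc⟩ => by
    rw [annulus, mem_preimage, abs_of_pos hx₀]
    exact ⟨hb.trans (EReal.coe_nonneg.2 hx₀.le), (EReal.coe_lt_coe_iff.2 hxc).trans hcb'⟩
  refine (measure_pos_of_superset hsub ?_).ne'
  rw [Real.volume_Ioo]
  simpa using EReal.coe_pos.1 hc₀

lemma cellH_eq_setIntegral_gaussianPDFReal (b b' : EReal) (u θ s : ℝ) :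
    cellH b b' u θ s = ∫ x in annulus b b', gaussianPDFReal θ (u ^ 2 + s).toNNReal x := by
  simp only [cellH, etaFn_inv_mul_stdPhi]
  rfl

lemma cellH_pos {b b' : EReal} (hb : b ≤ 0) (hb' : 0 < b') {u s : ℝ} (h : 0 < u ^ 2 + s)
    (θ : ℝ) : 0 < cellH b b' u θ s := by
  rw [cellH_eq_setIntegral_gaussianPDFReal]
  exact setIntegral_gaussianPDFReal_pos θ (Real.toNNReal_pos.2 h).ne'
    (volume_annulus_ne_zero hb hb')

lemma continuousAt_cellH (b b' : EReal) {u s₀ : ℝ} (h : 0 < u ^ 2 + s₀) (θ : ℝ) :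
    ContinuousAt (cellH b b' u θ) s₀ := by
  simp only [funext (cellH_eq_setIntegral_gaussianPDFReal b b' u θ)]
  exact (continuousAt_setIntegral_gaussianPDFReal θ _ (Real.toNNReal_pos.2 h).ne').comp
    (f := fun s => (u ^ 2 + s).toNNReal) (by fun_prop)

lemma sum_mul_cellH_pos {k : ℕ} {b : ℕ → EReal} (hb₀ : b 0 ≤ 0) (hbk : 0 < b k)
    {w : Fin k → ℝ} (hw : ∀ j, 0 < w j) {u s : ℝ} (h : 0 < u ^ 2 + s) (θ : ℝ) :
    0 < ∑ j : Fin k, w j * cellH (b j) (b (j + 1)) u θ s := by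
  obtain ⟨m, hmk, hbm, hbm'⟩ := exists_apply_le_lt_apply_succ b hb₀ hbk
  refine Finset.sum_pos' (fun j _ => mul_nonneg (hw j).le ?_) ⟨⟨m, hmk⟩, Finset.mem_univ _,
    mul_pos (hw _) (cellH_pos hbm hbm' h θ)⟩
  rw [cellH_eq_setIntegral_gaussianPDFReal]
  exact setIntegral_nonneg_of_ae (ae_of_all _ fun x => gaussianPDFReal_nonneg _ _ x)

theorem loglik_tendsto_at_sigma_zero_general
    {n k : ℕ}
    (y u : Fin n → ℝ) (hu : ∀ i, 0 < u i)
    (lam : Fin k → ℝ)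
    (b : Fin n → ℕ → EReal)
    (hb0 : ∀ i, b i 0 = 0) (hbk : ∀ i, b i k = ⊤)
    (w : Fin k → ℝ) (hw : ∀ j, 0 < w j) (θ : ℝ) :
    Tendsto (fun sigma2 => loglik y u lam b w θ sigma2) (𝓝[>] (0 : ℝ))
      (𝓝 (loglik y u lam b w θ 0)) := by
  have hvar : ∀ i, 0 < u i ^ 2 + 0 := fun i => by simpa using pow_pos (hu i) 2
  have hη : ∀ i, etaFn (u i) 0 ≠ 0 := fun i => (Real.sqrt_pos.2 (hvar i)).ne'
  have hA : ∀ i, ContinuousAt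
      (fun s => ∑ j : Fin k, w j * cellH (b i j) (b i (j + 1)) (u i) θ s) 0 := fun i =>
    tendsto_finsetSum _ fun j _ => continuousAt_const.mul (continuousAt_cellH _ _ (hvar i) θ)
  have hA₀ : ∀ i, ∑ j : Fin k, w j * cellH (b i j) (b i (j + 1)) (u i) θ 0 ≠ 0 := fun i =>
    (sum_mul_cellH_pos (hb0 i).le (by simp [hbk i]) hw (hvar i) θ).ne'
  have hcont : ContinuousAt (loglik y u lam b w θ) 0 := by
    unfold loglik
    fun_prop (disch := first | exact hη _ | exact hA₀ _)
  exact hcont.tendsto.mono_left nhdsWithin_le_nhds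

/-- for fixed `w ∈ (0,∞)^k` and `θ`, the log-likelihood stays finite
as `σ² → 0⁺`: its limit exists and equals the (finite real) value `l(w, θ, 0)`. -/
theorem loglik_tendsto_at_sigma_zero
    {n k : ℕ} (hn : 1 ≤ n) (hk : 1 ≤ k)
    (y u : Fin n → ℝ) (hu : ∀ i, 0 < u i)
    (lam : Fin k → ℝ) (hlam : ∀ j, 0 < lam j)
    (b : Fin n → ℕ → EReal)
    (hb0 : ∀ i, b i 0 = 0) (hbk : ∀ i, b i k = ⊤)
    (hbmono : ∀ i, Monotone (b i))
    (hblt : ∀ i, ∀ j, j < k → b i j ≠ ⊤)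
    (w : Fin k → ℝ) (hw : ∀ j, 0 < w j) (θ : ℝ) :
    Tendsto (fun sigma2 => loglik y u lam b w θ sigma2) (𝓝[>] (0 : ℝ))
      (𝓝 (loglik y u lam b w θ 0)) :=
  loglik_tendsto_at_sigma_zero_general y u hu lam b hb0 hbk w hw θ
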